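/- Let L be a full-rank lattice of rank n in a Euclidean space. For every t > n/(2π), one has (1 − n/(2πt)) · ∑_{v∈L} e^{−πt‖v‖²} ≤ ∑_{v∈L, ‖v‖<1} e^{−πt‖v‖²}. -/

import Mathlib

/-!
The kernel `K(v) = (n / (2a) - ‖v‖²) e^{-a‖v‖²}` is, up to a positive constant, the
autocorrelation `∫ ⟪φ (x - z), φ (y - z)⟫ dz` of the vector field `φ u = e^{-2a‖u‖²} u`, so it
is positive definite; the constant `n / (2a)` is the ratio `∫ ‖x‖² e^{-a‖x‖²} / ∫ e^{-a‖x‖²}`.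
Averaging `K (v_x - v_y)` over lattice points `x, y` in growing boxes (Fejér's argument) shows
that its sum over the lattice is nonnegative, i.e. `∑ ‖v‖² e^{-a‖v‖²} ≤ n / (2a) ∑ e^{-a‖v‖²}`.
With `a = πt`, the terms with `‖v‖ ≥ 1` have `‖v‖² ≥ 1`, so they carry at most the fraction
`n / (2πt)` of the whole sum.
-/

open MeasureTheory Real Set Filter Topology Module
open scoped RealInnerProductSpace Finset

section GaussianIntegrals

variable {a : ℝ}

lemma integrableOn_Ioi_pow_mul_exp_neg_mul_sq (ha : 0 < a) (k : ℕ) :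
    IntegrableOn (fun y : ℝ => y ^ k * exp (-a * y ^ 2)) (Ioi 0) := by
  simpa using integrableOn_rpow_mul_exp_neg_mul_sq ha (s := k)
    (by linarith [k.cast_nonneg (α := ℝ)])

lemma integral_Ioi_pow_mul_exp_neg_mul_sq (ha : 0 < a) (k : ℕ) :
    ∫ y in Ioi (0 : ℝ), y ^ k * exp (-a * y ^ 2)
      = a ^ (-(k + 1 : ℝ) / 2) / 2 * Gamma ((k + 1) / 2) := by
  have := integral_rpow_mul_exp_neg_mul_rpow two_pos (q := k)
    (by linarith [k.cast_nonneg (α := ℝ)]) ha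
  simp only [rpow_natCast, rpow_two] at this
  rw [this]
  ring

lemma integral_Ioi_pow_add_two_mul_exp_neg_mul_sq (ha : 0 < a) (k : ℕ) :
    ∫ y in Ioi (0 : ℝ), y ^ (k + 2) * exp (-a * y ^ 2)
      = (k + 1) / (2 * a) * ∫ y in Ioi (0 : ℝ), y ^ k * exp (-a * y ^ 2) := by
  rw [integral_Ioi_pow_mul_exp_neg_mul_sq ha, integral_Ioi_pow_mul_exp_neg_mul_sq ha]
  have hΓ : Gamma ((((k + 2 : ℕ) : ℝ) + 1) / 2) = (k + 1) / 2 * Gamma ((k + 1) / 2) := by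
    rw [← Gamma_add_one (by positivity)]
    push_cast
    ring_nf
  have hpow : a ^ (-(((k + 2 : ℕ) : ℝ) + 1) / 2) = a ^ (-(k + 1 : ℝ) / 2) / a := by
    rw [← rpow_sub_one ha.ne']
    push_cast
    ring_nf
  rw [hΓ, hpow]
  field_simp

variable {E : Type*} [NormedAddCommGroup E] [NormedSpace ℝ E] [FiniteDimensional ℝ E]
  [Nontrivial E] [MeasurableSpace E] [BorelSpace E] (μ : Measure E) [μ.IsAddHaarMeasure]

lemma integrable_norm_pow_mul_exp_neg_mul_norm_sq (ha : 0 < a) (k : ℕ) :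
    Integrable (fun x : E => ‖x‖ ^ k * exp (-a * ‖x‖ ^ 2)) μ := by
  rw [integrable_fun_norm_addHaar μ (f := fun y => y ^ k * exp (-a * y ^ 2))]
  simpa only [smul_eq_mul, ← mul_assoc, ← pow_add] using
    integrableOn_Ioi_pow_mul_exp_neg_mul_sq ha (finrank ℝ E - 1 + k)

lemma integrable_exp_neg_mul_norm_sq (ha : 0 < a) :
    Integrable (fun x : E => exp (-a * ‖x‖ ^ 2)) μ := by
  simpa using integrable_norm_pow_mul_exp_neg_mul_norm_sq μ ha 0

lemma integral_norm_sq_mul_exp_neg_mul_norm_sq (ha : 0 < a) :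
    ∫ x, ‖x‖ ^ 2 * exp (-a * ‖x‖ ^ 2) ∂μ
      = finrank ℝ E / (2 * a) * ∫ x, exp (-a * ‖x‖ ^ 2) ∂μ := by
  rw [integral_fun_norm_addHaar μ (fun y => y ^ 2 * exp (-a * y ^ 2)),
    integral_fun_norm_addHaar μ (fun y => exp (-a * y ^ 2))]
  simp only [smul_eq_mul, ← mul_assoc, ← pow_add]
  have hdim : ((finrank ℝ E - 1 : ℕ) : ℝ) + 1 = finrank ℝ E := by
    rw [Nat.cast_sub finrank_pos]
    ring
  rw [integral_Ioi_pow_add_two_mul_exp_neg_mul_sq ha, hdim, nsmul_eq_mul, nsmul_eq_mul]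
  ring

end GaussianIntegrals

section MomentKernel

variable {E : Type*} [NormedAddCommGroup E] [InnerProductSpace ℝ E] {a : ℝ}

variable (E) in
noncomputable def gaussianMomentKernel (a : ℝ) (v : E) : ℝ :=
  (finrank ℝ E / (2 * a) - ‖v‖ ^ 2) * exp (-a * ‖v‖ ^ 2)

noncomputable def gaussianGradField (a : ℝ) (x z : E) : E :=
  exp (-(2 * a) * ‖x - z‖ ^ 2) • (x - z)

lemma inner_gaussianGradField_midpoint_add (a : ℝ) (x y w : E) :
    ⟪gaussianGradField a x ((2 : ℝ)⁻¹ • (x + y) + w),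
        gaussianGradField a y ((2 : ℝ)⁻¹ • (x + y) + w)⟫
      = exp (-a * ‖x - y‖ ^ 2) * ((‖w‖ ^ 2 - ‖x - y‖ ^ 2 / 4) * exp (-(4 * a) * ‖w‖ ^ 2)) := by
  set d : E := (2 : ℝ)⁻¹ • (x - y)
  have hx : x - ((2 : ℝ)⁻¹ • (x + y) + w) = d - w := by module
  have hy : y - ((2 : ℝ)⁻¹ • (x + y) + w) = -(d + w) := by module
  have hd : ‖d‖ ^ 2 = ‖x - y‖ ^ 2 / 4 := by
    rw [norm_smul, mul_pow, norm_inv, Real.norm_two]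
    ring
  have hinner : ⟪d - w, -(d + w)⟫ = ‖w‖ ^ 2 - ‖d‖ ^ 2 := by
    rw [inner_neg_right, inner_sub_left, inner_add_right, inner_add_right,
      real_inner_self_eq_norm_sq, real_inner_self_eq_norm_sq, real_inner_comm d w]
    ring
  rw [gaussianGradField, gaussianGradField, hx, hy, real_inner_smul_left, real_inner_smul_right,
    hinner, norm_neg, ← hd, norm_add_sq_real, norm_sub_sq_real]
  simp only [mul_comm (‖w‖ ^ 2 - ‖d‖ ^ 2), ← mul_assoc, ← exp_add]
  congr 2
  rw [show ‖x - y‖ ^ 2 = 4 * ‖d‖ ^ 2 by rw [hd]; ring]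
  ring

section Integrals

variable [FiniteDimensional ℝ E] [Nontrivial E] [MeasurableSpace E] [BorelSpace E]
  (μ : Measure E) [μ.IsAddHaarMeasure]

lemma integrable_inner_gaussianGradField (ha : 0 < a) (x y : E) :
    Integrable (fun z => ⟪gaussianGradField a x z, gaussianGradField a y z⟫) μ := by
  have h4a : 0 < 4 * a := by positivity
  have hg : Integrable (fun w : E =>
      exp (-a * ‖x - y‖ ^ 2) * ((‖w‖ ^ 2 - ‖x - y‖ ^ 2 / 4) * exp (-(4 * a) * ‖w‖ ^ 2))) μ := by
    simp only [sub_mul]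
    exact ((integrable_norm_pow_mul_exp_neg_mul_norm_sq μ h4a 2).sub
      ((integrable_exp_neg_mul_norm_sq μ h4a).const_mul _)).const_mul _
  refine (hg.comp_sub_right ((2 : ℝ)⁻¹ • (x + y))).congr (Eventually.of_forall fun z => ?_)
  simpa using (inner_gaussianGradField_midpoint_add a x y (z - (2 : ℝ)⁻¹ • (x + y))).symm

lemma integral_inner_gaussianGradField (ha : 0 < a) (x y : E) :
    ∫ z, ⟪gaussianGradField a x z, gaussianGradField a y z⟫ ∂μ
      = (∫ w, exp (-(4 * a) * ‖w‖ ^ 2) ∂μ) / 4 * gaussianMomentKernel E a (x - y) := by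
  have h4a : 0 < 4 * a := by positivity
  rw [← integral_add_left_eq_self _ ((2 : ℝ)⁻¹ • (x + y))]
  simp only [inner_gaussianGradField_midpoint_add, sub_mul]
  rw [integral_const_mul, integral_sub (integrable_norm_pow_mul_exp_neg_mul_norm_sq μ h4a 2)
    ((integrable_exp_neg_mul_norm_sq μ h4a).const_mul _), integral_const_mul,
    integral_norm_sq_mul_exp_neg_mul_norm_sq μ h4a, gaussianMomentKernel]
  field_simp

end Integrals

theorem sum_sum_gaussianMomentKernel_nonneg [FiniteDimensional ℝ E] {ι : Type*} (ha : 0 < a)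
    (s : Finset ι) (x : ι → E) :
    0 ≤ ∑ i ∈ s, ∑ j ∈ s, gaussianMomentKernel E a (x i - x j) := by
  rcases subsingleton_or_nontrivial E with hE | hE
  · simp [gaussianMomentKernel, Subsingleton.elim _ (0 : E), finrank_zero_of_subsingleton]
  let _ : MeasurableSpace E := borel E
  have _ : BorelSpace E := ⟨rfl⟩
  set μ : Measure E := Measure.addHaar
  set M := ∫ w, exp (-(4 * a) * ‖w‖ ^ 2) ∂μ
  have hM : 0 < M := integral_exp_pos (integrable_exp_neg_mul_norm_sq μ (by positivity))
  have hkernel : ∀ i j, gaussianMomentKernel E a (x i - x j)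
      = 4 / M * ∫ z, ⟪gaussianGradField a (x i) z, gaussianGradField a (x j) z⟫ ∂μ := by
    intro i j
    rw [integral_inner_gaussianGradField μ ha]
    change _ = 4 / M * (M / 4 * _)
    field_simp
  calc 0 ≤ 4 / M * ∫ z, ⟪∑ i ∈ s, gaussianGradField a (x i) z,
          ∑ j ∈ s, gaussianGradField a (x j) z⟫ ∂μ :=
        mul_nonneg (by positivity) (integral_nonneg fun z => real_inner_self_nonneg)
    _ = _ := by
      simp only [sum_inner]
      simp only [inner_sum]
      rw [integral_finsetSum _ fun i _ => integrable_finsetSum _ fun j _ =>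
        integrable_inner_gaussianGradField μ ha _ _, Finset.mul_sum]
      refine Finset.sum_congr rfl fun i _ => ?_
      rw [integral_finsetSum _ fun j _ => integrable_inner_gaussianGradField μ ha _ _,
        Finset.mul_sum]
      simp only [hkernel]

end MomentKernel

section FejerAveraging

lemma Finset.sum_sum_sub_eq_tsum {G : Type*} [AddCommGroup G] [DecidableEq G] (s : Finset G)
    (h : G → ℝ) :
    ∑ x ∈ s, ∑ y ∈ s, h (x - y) = ∑' m, (#{x ∈ s | x - m ∈ s} : ℝ) * h m := by
  have hrow : ∀ x, ∑ y ∈ s, h (x - y) = ∑' m, if x - m ∈ s then h m else 0 := by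
    intro x
    rw [← (Equiv.subLeft x).tsum_eq]
    simp only [Equiv.subLeft_apply, sub_sub_cancel]
    rw [tsum_eq_sum (s := s) fun y hy => if_neg hy, Finset.sum_ite_mem, Finset.inter_self]
  simp only [hrow]
  rw [← Summable.tsum_finsetSum fun x _ => summable_of_hasFiniteSupport ?_]
  · simp [Finset.sum_ite, Finset.sum_const]
  · refine (s.finite_toSet.image (x - ·)).subset fun m hm => ?_
    simp only [Function.mem_support, ne_eq, ite_eq_right_iff, Classical.not_imp] at hm
    exact ⟨x - m, hm.1, sub_sub_cancel x m⟩

variable {ι : Type*} [Fintype ι] [DecidableEq ι]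

variable (ι) in
noncomputable def intBox (R : ℕ) : Finset (ι → ℤ) :=
  Fintype.piFinset fun _ => Finset.Icc (-(R : ℤ)) R

lemma card_intBox (R : ℕ) : #(intBox ι R) = (2 * R + 1) ^ Fintype.card ι := by
  simp only [intBox, Fintype.card_piFinset, Int.card_Icc, Finset.prod_const, Finset.card_univ]
  congr
  omega

lemma intBox_subset_filter_sub_mem {m : ι → ℤ} {K : ℕ} (hK : ∀ i, (m i).natAbs ≤ K) (R : ℕ) :
    intBox ι R ⊆ {x ∈ intBox ι (R + K) | x - m ∈ intBox ι (R + K)} := by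
  intro x hx
  simp only [intBox, Finset.mem_filter, Fintype.mem_piFinset, Finset.mem_Icc,
    Pi.sub_apply] at hx ⊢
  refine ⟨fun i => ?_, fun i => ?_⟩ <;> have := hx i <;> have := hK i <;> push_cast <;> omega

variable (ι) in
noncomputable def fejerWeight (R : ℕ) (m : ι → ℤ) : ℝ :=
  #{x ∈ intBox ι R | x - m ∈ intBox ι R} / #(intBox ι R)

lemma fejerWeight_nonneg (R : ℕ) (m : ι → ℤ) : 0 ≤ fejerWeight ι R m := by
  unfold fejerWeight
  positivity

lemma fejerWeight_le_one (R : ℕ) (m : ι → ℤ) : fejerWeight ι R m ≤ 1 :=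
  div_le_one_of_le₀ (Nat.cast_le.2 (Finset.card_filter_le _ _)) (Nat.cast_nonneg _)

lemma tendsto_fejerWeight (m : ι → ℤ) : Tendsto (fejerWeight ι · m) atTop (𝓝 1) := by
  obtain ⟨K, hK⟩ := Finite.exists_le fun i => (m i).natAbs
  rw [← tendsto_add_atTop_iff_nat K]
  have hlim : Tendsto (fun R : ℕ =>
      (((2 * R + 1 : ℕ) : ℝ) / ((2 * R + 1 : ℕ) + 2 * K)) ^ Fintype.card ι) atTop (𝓝 1) := by
    have hodd : Tendsto (fun R : ℕ => 2 * R + 1) atTop atTop :=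
      tendsto_atTop_mono (fun R => show R ≤ 2 * R + 1 by omega) tendsto_id
    simpa using ((tendsto_natCast_div_add_atTop (2 * K : ℝ)).comp hodd).pow (Fintype.card ι)
  refine tendsto_of_tendsto_of_tendsto_of_le_of_le hlim tendsto_const_nhds (fun R => ?_)
    fun R => fejerWeight_le_one _ m
  have hcard := Finset.card_le_card (intBox_subset_filter_sub_mem hK R)
  rw [card_intBox] at hcard
  have hden : ((2 * R + 1 : ℕ) + 2 * K : ℝ) ^ Fintype.card ι
      = (((2 * (R + K) + 1) ^ Fintype.card ι : ℕ) : ℝ) := by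
    push_cast
    ring
  rw [fejerWeight, card_intBox, div_pow, hden]
  gcongr
  exact_mod_cast hcard

theorem tsum_nonneg_of_sum_sum_sub_nonneg {h : (ι → ℤ) → ℝ} (hh : Summable h)
    (hpd : ∀ s : Finset (ι → ℤ), 0 ≤ ∑ x ∈ s, ∑ y ∈ s, h (x - y)) : 0 ≤ ∑' m, h m := by
  have hlim : Tendsto (fun R => ∑' m, fejerWeight ι R m * h m) atTop (𝓝 (∑' m, h m)) := by
    refine tendsto_tsum_of_dominated_convergence hh.abs
      (fun m => by simpa using (tendsto_fejerWeight m).mul_const (h m))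
      (Eventually.of_forall fun R m => ?_)
    rw [norm_mul, Real.norm_of_nonneg (fejerWeight_nonneg R m), Real.norm_eq_abs]
    exact mul_le_of_le_one_left (abs_nonneg _) (fejerWeight_le_one R m)
  refine ge_of_tendsto' hlim fun R => ?_
  calc 0 ≤ (∑ x ∈ intBox ι R, ∑ y ∈ intBox ι R, h (x - y)) / #(intBox ι R) :=
        div_nonneg (hpd _) (Nat.cast_nonneg _)
    _ = ∑' m, fejerWeight ι R m * h m := by
      rw [Finset.sum_sum_sub_eq_tsum, ← tsum_div_const]
      exact tsum_congr fun m => by rw [fejerWeight]; ring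

end FejerAveraging

section Summability

lemma summable_exp_neg_mul_int_sq {c : ℝ} (hc : 0 < c) :
    Summable fun k : ℤ => exp (-c * k ^ 2) := by
  refine (summable_pow_mul_jacobiTheta₂_term_bound 0 (div_pos hc pi_pos) 0).congr fun k => ?_
  field_simp
  simp

lemma summable_prod_apply_of_nonneg {ι α : Type*} [Fintype ι] {u : α → ℝ} (hu0 : 0 ≤ u)
    (hu : Summable u) : Summable fun m : ι → α => ∏ i, u (m i) := by
  classical
  refine summable_of_sum_le (c := (∑' k, u k) ^ Fintype.card ι)
    (fun m => Finset.prod_nonneg fun i _ => hu0 _) fun F => ?_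
  calc ∑ m ∈ F, ∏ i, u (m i)
      ≤ ∑ m ∈ Fintype.piFinset fun i => F.image (· i), ∏ i, u (m i) :=
        Finset.sum_le_sum_of_subset_of_nonneg
          (fun m hm => Fintype.mem_piFinset.2 fun i => Finset.mem_image_of_mem _ hm)
          (fun m _ _ => Finset.prod_nonneg fun i _ => hu0 _)
    _ = ∏ i, ∑ k ∈ F.image (· i), u k := (Finset.prod_univ_sum _ _).symm
    _ ≤ ∏ _i : ι, ∑' k, u k :=
        Finset.prod_le_prod (fun i _ => Finset.sum_nonneg fun k _ => hu0 _)
          fun i _ => hu.sum_le_tsum _ fun k _ => hu0 _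
    _ = (∑' k, u k) ^ Fintype.card ι := by rw [Finset.prod_const, Finset.card_univ]

variable {V : Type*} [NormedAddCommGroup V] [NormedSpace ℝ V] {ι : Type*} [Fintype ι]
  (b : Basis ι ℝ V) {s : ℝ}

lemma abs_intCast_le_norm_mul_norm_sum_zsmul (m : ι → ℤ) (i : ι) :
    |(m i : ℝ)| ≤ ‖(b.equivFunL : V →L[ℝ] ι → ℝ)‖ * ‖∑ j, m j • b j‖ := by
  have hcoord : b.equivFunL (∑ j, m j • b j) = fun j => (m j : ℝ) := by
    have hv : ∑ j, m j • b j = b.equivFun.symm fun j => (m j : ℝ) := by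
      simp [Basis.equivFun_symm_apply, Int.cast_smul_eq_zsmul]
    rw [hv]
    exact b.equivFun.apply_symm_apply _
  calc |(m i : ℝ)| ≤ ‖fun j => (m j : ℝ)‖ := by
        simpa using norm_le_pi_norm (fun j => (m j : ℝ)) i
    _ = ‖(b.equivFunL : V →L[ℝ] ι → ℝ) (∑ j, m j • b j)‖ := by rw [← hcoord]; rfl
    _ ≤ _ := ContinuousLinearMap.le_opNorm _ _

lemma summable_exp_neg_mul_norm_sq_sum_zsmul (hs : 0 < s) :
    Summable fun m : ι → ℤ => exp (-s * ‖∑ i, m i • b i‖ ^ 2) := by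
  set C := ‖(b.equivFunL : V →L[ℝ] ι → ℝ)‖
  set c := s / (Fintype.card ι * C ^ 2 + 1)
  have hc : 0 < c := by positivity
  refine Summable.of_nonneg_of_le (fun _ => (exp_pos _).le) (fun m => ?_)
    (summable_prod_apply_of_nonneg (fun _ => (exp_pos _).le) (summable_exp_neg_mul_int_sq hc))
  rw [← exp_sum, exp_le_exp]
  set r := ‖∑ i, m i • b i‖ ^ 2
  have hcoord : ∀ i, (m i : ℝ) ^ 2 ≤ C ^ 2 * r := fun i => by
    rw [← sq_abs, ← mul_pow]
    exact pow_le_pow_left₀ (abs_nonneg _) (abs_intCast_le_norm_mul_norm_sum_zsmul b m i) 2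
  have hcr : c * (Fintype.card ι * C ^ 2) ≤ s := by
    rw [div_mul_eq_mul_div, div_le_iff₀ (by positivity)]
    nlinarith [sq_nonneg C]
  calc -s * r ≤ -(c * (Fintype.card ι * C ^ 2)) * r := by
        nlinarith [sq_nonneg ‖∑ i, m i • b i‖]
    _ = ∑ _i : ι, -c * (C ^ 2 * r) := by simp [Finset.card_univ]; ring
    _ ≤ ∑ i, -c * (m i : ℝ) ^ 2 := Finset.sum_le_sum fun i _ => by nlinarith [hcoord i]

lemma summable_norm_sq_mul_exp_neg_mul_norm_sq_sum_zsmul (hs : 0 < s) :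
    Summable fun m : ι → ℤ => ‖∑ i, m i • b i‖ ^ 2 * exp (-s * ‖∑ i, m i • b i‖ ^ 2) := by
  refine Summable.of_nonneg_of_le (fun _ => by positivity) (fun m => ?_)
    ((summable_exp_neg_mul_norm_sq_sum_zsmul b (half_pos hs)).mul_left (2 / s))
  set r := ‖∑ i, m i • b i‖ ^ 2
  have hdecay := mul_exp_neg_le_exp_neg_one (s / 2 * r)
  have hexp : exp (-1) ≤ 1 := exp_le_one_iff.2 (by norm_num)
  have hsplit : exp (-s * r) = exp (-(s / 2 * r)) * exp (-(s / 2) * r) := by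
    rw [← exp_add]
    ring_nf
  calc r * exp (-s * r) = 2 / s * (s / 2 * r * exp (-(s / 2 * r))) * exp (-(s / 2) * r) := by
        rw [hsplit]
        field_simp
    _ ≤ 2 / s * 1 * exp (-(s / 2) * r) := by gcongr; linarith
    _ = 2 / s * exp (-(s / 2) * r) := by ring

end Summability

lemma Finset.sum_sub_zsmul {ι G : Type*} [Fintype ι] [AddCommGroup G] (v : ι → G)
    (x y : ι → ℤ) : ∑ i, (x - y) i • v i = ∑ i, x i • v i - ∑ i, y i • v i := by
  simp [sub_smul, Finset.sum_sub_distrib]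

theorem tsum_norm_sq_mul_exp_neg_mul_norm_sq_sum_zsmul_le {V : Type*} [NormedAddCommGroup V]
    [InnerProductSpace ℝ V] {ι : Type*} [Fintype ι] (b : Basis ι ℝ V) {a : ℝ} (ha : 0 < a) :
    ∑' m : ι → ℤ, ‖∑ i, m i • b i‖ ^ 2 * exp (-a * ‖∑ i, m i • b i‖ ^ 2)
      ≤ Fintype.card ι / (2 * a) * ∑' m : ι → ℤ, exp (-a * ‖∑ i, m i • b i‖ ^ 2) := by
  classical
  have := b.finiteDimensional_of_finite
  have hS0 := summable_exp_neg_mul_norm_sq_sum_zsmul b ha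
  have hS2 := summable_norm_sq_mul_exp_neg_mul_norm_sq_sum_zsmul b ha
  have hkernel := tsum_nonneg_of_sum_sum_sub_nonneg
    (h := fun m : ι → ℤ => gaussianMomentKernel V a (∑ i, m i • b i))
    (by simpa only [gaussianMomentKernel, finrank_eq_card_basis b, sub_mul] using
      (hS0.mul_left _).sub hS2)
    fun s => by
      simpa only [Finset.sum_sub_zsmul] using
        sum_sum_gaussianMomentKernel_nonneg ha s fun m => ∑ i, m i • b i
  simp only [gaussianMomentKernel, finrank_eq_card_basis b, sub_mul] at hkernel
  rw [(hS0.mul_left _).tsum_sub hS2, tsum_mul_left] at hkernel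
  linarith

lemma one_sub_mul_tsum_le_tsum_subtype_lt_one {α : Type*} {f r : α → ℝ} {c : ℝ} (hf0 : 0 ≤ f)
    (hf : Summable f) (hrf : Summable fun x => r x ^ 2 * f x)
    (hmoment : ∑' x, r x ^ 2 * f x ≤ c * ∑' x, f x) :
    (1 - c) * ∑' x, f x ≤ ∑' x : {x // r x < 1}, f x := by
  have htail : ∀ x, (1 - r x ^ 2) * f x ≤ {x | r x < 1}.indicator f x := by
    intro x
    by_cases hx : x ∈ {x | r x < 1}
    · rw [Set.indicator_of_mem hx]
      nlinarith [mul_nonneg (sq_nonneg (r x)) (hf0 x)]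
    · rw [Set.indicator_of_notMem hx]
      have hr : 1 ≤ r x := not_lt.1 hx
      exact mul_nonpos_of_nonpos_of_nonneg (by nlinarith) (hf0 x)
  calc (1 - c) * ∑' x, f x ≤ ∑' x, f x - ∑' x, r x ^ 2 * f x := by linarith
    _ = ∑' x, (1 - r x ^ 2) * f x := by
        rw [← hf.tsum_sub hrf]
        exact tsum_congr fun x => by ring
    _ ≤ ∑' x, {x | r x < 1}.indicator f x :=
        ((hf.sub hrf).congr fun x => by ring).tsum_le_tsum htail (hf.indicator _)
    _ = ∑' x : {x // r x < 1}, f x := (tsum_subtype _ f).symm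

theorem banaszczyk_truncation
    {V : Type*} [NormedAddCommGroup V] [InnerProductSpace ℝ V]
    {n : ℕ} (b : Module.Basis (Fin n) ℝ V) (t : ℝ) (ht : n / (2 * Real.pi) < t) :
    (1 - n / (2 * Real.pi * t)) *
        (∑' m : Fin n → ℤ, Real.exp (-Real.pi * t * ‖∑ i, m i • b i‖ ^ 2))
      ≤ ∑' m : {m : Fin n → ℤ // ‖∑ i, m i • b i‖ < 1},
          Real.exp (-Real.pi * t * ‖∑ i, (m : Fin n → ℤ) i • b i‖ ^ 2) := by
  have hπt : 0 < π * t := mul_pos pi_pos (lt_of_le_of_lt (by positivity) ht)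
  have hmoment := tsum_norm_sq_mul_exp_neg_mul_norm_sq_sum_zsmul_le b hπt
  rw [Fintype.card_fin, ← mul_assoc] at hmoment
  simp only [neg_mul] at hmoment ⊢
  exact one_sub_mul_tsum_le_tsum_subtype_lt_one (fun _ => (exp_pos _).le)
    (by simpa only [neg_mul] using summable_exp_neg_mul_norm_sq_sum_zsmul b hπt)
    (by simpa only [neg_mul] using summable_norm_sq_mul_exp_neg_mul_norm_sq_sum_zsmul b hπt)
    hmoment
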